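/- Let A be an almost Kähler–Poisson algebra of geometric dimension n, and let T^{ij} be a tangential tensor (i.e. T^{ij} D_j^k = T^{ik} and D^i_j T^{jk} = T^{ik}). Then the Cauchy–Schwarz-type inequality (Tr D)² (T^{ij})* T_{ij} ≥ (Tr D)(Tr T)*(Tr T) holds with respect to the positivity preorder on A; equivalently, since Tr D = n, (T^{ij})* T_{ij} ≥ (1/n)(Tr T)*(Tr T), where Tr T = T^i_i. -/

import Mathlib

open scoped BigOperators

namespace KPA

/-- The field of fractions of the polynomial ring `ℂ[x¹,…,xᵐ]`. -/
abbrev A (m : ℕ) := FractionRing (MvPolynomial (Fin m) ℂ)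

/-- The generators `x^i` of `A m`. -/
noncomputable def Xg {m : ℕ} (i : Fin m) : A m :=
  algebraMap (MvPolynomial (Fin m) ℂ) (A m) (MvPolynomial.X i)

/-- The image of a complex constant in `A m`. -/
noncomputable def cC {m : ℕ} (z : ℂ) : A m :=
  algebraMap (MvPolynomial (Fin m) ℂ) (A m) (MvPolynomial.C z)

/-- An almost Kähler–Poisson algebra: the field of fractions `A m` of `ℂ[x¹,…,xᵐ]`,
equipped with a ∗-structure `st` fixing the generators, a Poisson bracket `br`
compatible with ∗, and an invertible hermitian element `γ2` such that
`P^i_k P^k_l P^l_j = -γ² P^i_j` where `P^{ij} = {x^i, x^j}`. -/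
structure AKP (m : ℕ) where
  br : A m → A m → A m
  st : A m → A m
  br_add_left : ∀ a b c, br (a + b) c = br a c + br b c
  br_antisymm : ∀ a b, br a b = - br b a
  br_leibniz : ∀ a b c, br a (b * c) = br a b * c + b * br a c
  br_jacobi : ∀ a b c, br a (br b c) + br b (br c a) + br c (br a b) = 0
  br_const : ∀ (z : ℂ) (a : A m), br (cC z) a = 0
  st_add : ∀ a b, st (a + b) = st a + st b
  st_mul : ∀ a b, st (a * b) = st a * st b
  st_invol : ∀ a, st (st a) = a
  st_const : ∀ z : ℂ, st (cC z) = cC (starRingEnd ℂ z)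
  st_x : ∀ i, st (Xg i) = Xg i
  st_br : ∀ a b, st (br a b) = br (st a) (st b)
  γ2 : A m
  γ2_ne : γ2 ≠ 0
  γ2_herm : st γ2 = γ2
  akp : ∀ i j, (∑ k, ∑ l, br (Xg i) (Xg k) * br (Xg k) (Xg l) * br (Xg l) (Xg j))
      = - γ2 * br (Xg i) (Xg j)

namespace AKP

variable {m : ℕ} (S : AKP m)

/-- `P^{ij} = {x^i, x^j}`. -/
noncomputable def P (i j : Fin m) : A m := S.br (Xg i) (Xg j)

/-- `D^i(u) = γ^{-2} {u, x^k} P^i_k`. -/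
noncomputable def D (u : A m) (i : Fin m) : A m := S.γ2⁻¹ * ∑ k, S.br u (Xg k) * S.P i k

/-- `D^{ik} = D^i(x^k)`. -/
noncomputable def Dm (i k : Fin m) : A m := S.D (Xg k) i

/-- Membership in the tangent space `X(A) = {D(X) : X ∈ Der(A)}` (in components). -/
def tang (T : Fin m → A m) : Prop := ∃ V : Fin m → A m, ∀ i, T i = ∑ k, S.Dm i k * V k

/-- The tangent space `X(A)` as a submodule of `A^m` : the range of the projection `D`. -/
noncomputable def tSp : Submodule (A m) (Fin m → A m) :=
  LinearMap.range (Matrix.mulVecLin (Matrix.of fun i k => S.Dm i k))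

/-- Action `X(u) = X^i D_i(u)` of a tangent vector on an element. -/
noncomputable def act (X : Fin m → A m) (u : A m) : A m := ∑ i, X i * S.D u i

/-- The covariant derivative `∇_X Y = D^{ik} X^l D_l(Y_k) ∂_i` (in components). -/
noncomputable def nab (X Y : Fin m → A m) (i : Fin m) : A m :=
  ∑ k, S.Dm i k * ∑ l, X l * S.D (Y k) l

/-- The commutator `[X,Y]^i = X(Y^i) - Y(X^i)`. -/
noncomputable def lie (X Y : Fin m → A m) (i : Fin m) : A m := S.act X (Y i) - S.act Y (X i)

/-- The curvature `R(X,Y)Z = ∇_X ∇_Y Z - ∇_Y ∇_X Z - ∇_{[X,Y]} Z`. -/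
noncomputable def curv (X Y Z : Fin m → A m) (i : Fin m) : A m :=
  S.nab X (S.nab Y Z) i - S.nab Y (S.nab X Z) i - S.nab (S.lie X Y) Z i

/-- The bilinear form `(X,Y) = X^i Y_i`. -/
noncomputable def ipa (_S : AKP m) (X Y : Fin m → A m) : A m := ∑ i, X i * Y i

/-- `R(X,Y,Z,V) = (R(Z,V)Y, X)`. -/
noncomputable def Rq (X Y Z V : Fin m → A m) : A m := S.ipa (S.curv Z V Y) X

/-- `(∇_X R)(Y,Z,V)`, the covariant derivative of the curvature tensor. -/
noncomputable def nabR (X Y Z V : Fin m → A m) (i : Fin m) : A m :=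
  S.nab X (S.curv Y Z V) i - S.curv (S.nab X Y) Z V i
    - S.curv Y (S.nab X Z) V i - S.curv Y Z (S.nab X V) i

/-- `Π^{ij} = δ^{ij} - D^{ij}`. -/
noncomputable def Pim (i j : Fin m) : A m := (if i = j then 1 else 0) - S.Dm i j

/-- The positivity preorder: `a ≥ 0` iff `a = (∑ uᵢ* uᵢ)/(∑ vₖ* vₖ)`. -/
def pos (a : A m) : Prop :=
  ∃ (N N' : ℕ) (u : Fin N → A m) (v : Fin N' → A m),
    a = (∑ i, S.st (u i) * u i) / (∑ k, S.st (v k) * v k)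

end AKP
end KPA

/-! The matrix `D = -γ⁻² P²` is a hermitian, symmetric projection (from `P³ = -γ² P`), so
`∑ D_ij D_ij = Tr D = n` and, for tangential `T`, `∑ D_ij T_ij = Tr T`. Regarding `D` and `T` as
vectors indexed by pairs `(i, j)`, Lagrange's identity
`∑_{x,y} (D_x T_y - D_y T_x)* (D_x T_y - D_y T_x) = 2 (|D|² |T|² - (D,T)* (D,T))`
writes `n ∑ T_ij* T_ij - (Tr T)* Tr T` as half a sum of hermitian squares. -/

namespace KPA
namespace AKP

variable {m : ℕ} (S : AKP m)

noncomputable def stRingHom : A m →+* A m where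
  toFun := S.st
  map_one' := by simpa [cC] using S.st_const 1
  map_mul' := S.st_mul
  map_zero' := by simpa using S.st_add 0 0
  map_add' := S.st_add

lemma st_one : S.st 1 = 1 := map_one S.stRingHom

lemma st_sub (a b : A m) : S.st (a - b) = S.st a - S.st b := map_sub S.stRingHom a b

lemma st_inv (a : A m) : S.st a⁻¹ = (S.st a)⁻¹ := map_inv₀ S.stRingHom a

lemma st_sum {ι : Type*} (s : Finset ι) (f : ι → A m) :
    S.st (∑ i ∈ s, f i) = ∑ i ∈ s, S.st (f i) := map_sum S.stRingHom f s

section Projection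

noncomputable def Pmat : Matrix (Fin m) (Fin m) (A m) := Matrix.of S.P

lemma Pmat_mul_Pmat_mul_Pmat : S.Pmat * S.Pmat * S.Pmat = -S.γ2 • S.Pmat := by
  ext i j
  simp only [Pmat, P, Matrix.mul_apply, Matrix.of_apply, Matrix.smul_apply, smul_eq_mul,
    Finset.sum_mul, ← S.akp i j]
  exact Finset.sum_comm

lemma of_Dm_eq : Matrix.of S.Dm = -S.γ2⁻¹ • (S.Pmat * S.Pmat) := by
  ext i k
  simp only [Dm, D, Pmat, P, Matrix.of_apply, Matrix.smul_apply, Matrix.mul_apply, smul_eq_mul,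
    Finset.mul_sum]
  refine Finset.sum_congr rfl fun j _ => ?_
  rw [S.br_antisymm (Xg k) (Xg j)]
  ring

lemma of_Dm_mul_self : Matrix.of S.Dm * Matrix.of S.Dm = Matrix.of S.Dm := by
  have hγ := S.γ2_ne
  rw [of_Dm_eq, smul_mul_smul_comm, ← mul_assoc, S.Pmat_mul_Pmat_mul_Pmat, smul_mul_assoc,
    smul_smul]
  congr 1
  field_simp

lemma sum_Dm_mul_Dm (i k : Fin m) : ∑ j, S.Dm i j * S.Dm j k = S.Dm i k := by
  simpa only [Matrix.mul_apply, Matrix.of_apply] using congrFun₂ S.of_Dm_mul_self i k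

lemma Dm_comm (i k : Fin m) : S.Dm i k = S.Dm k i := by
  simp only [Dm, D, P]
  congr 1
  exact Finset.sum_congr rfl fun j _ => mul_comm _ _

lemma st_Dm (i k : Fin m) : S.st (S.Dm i k) = S.Dm i k := by
  simp only [Dm, D, P, S.st_mul, st_inv, S.γ2_herm, st_sum, S.st_br, S.st_x]

lemma sum_Dm_mul_self_eq_trace : ∑ i, ∑ j, S.Dm i j * S.Dm i j = ∑ i, S.Dm i i :=
  Finset.sum_congr rfl fun i _ =>
    (Finset.sum_congr rfl fun j _ => by rw [S.Dm_comm j i]).trans (S.sum_Dm_mul_Dm i i)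

lemma sum_Dm_mul_eq_trace {T : Fin m → Fin m → A m}
    (hT : ∀ i k, ∑ j, S.Dm i j * T j k = T i k) :
    ∑ i, ∑ j, S.Dm i j * T i j = ∑ i, T i i := by
  rw [Finset.sum_comm]
  exact Finset.sum_congr rfl fun j _ =>
    (Finset.sum_congr rfl fun i _ => by rw [S.Dm_comm]).trans (hT j j)

end Projection

section Positivity

lemma pos_of_fintype {ι κ : Type*} [Fintype ι] [Fintype κ] (u : ι → A m) (v : κ → A m) :
    S.pos ((∑ i, S.st (u i) * u i) / ∑ k, S.st (v k) * v k) :=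
  ⟨_, _, u ∘ (Fintype.equivFin ι).symm, v ∘ (Fintype.equivFin κ).symm,
    (congrArg₂ (· / ·) (Equiv.sum_comp (Fintype.equivFin ι).symm fun i => S.st (u i) * u i)
      (Equiv.sum_comp (Fintype.equivFin κ).symm fun k => S.st (v k) * v k)).symm⟩

lemma pos_sum_st_mul_self {ι : Type*} [Fintype ι] (u : ι → A m) :
    S.pos (∑ i, S.st (u i) * u i) := by
  simpa [S.st_one] using S.pos_of_fintype u fun _ : Unit => (1 : A m)

lemma pos_natCast_mul {a : A m} (ha : S.pos a) (n : ℕ) : S.pos (n * a) := by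
  obtain ⟨N, N', u, v, rfl⟩ := ha
  convert S.pos_of_fintype (fun x : Fin n × Fin N => u x.2) v using 1
  simp [Fintype.sum_prod_type, mul_div_assoc]

lemma pos_inv_natCast_mul {a : A m} (ha : S.pos a) (n : ℕ) : S.pos ((n : A m)⁻¹ * a) := by
  obtain ⟨N, N', u, v, rfl⟩ := ha
  convert S.pos_of_fintype u (fun x : Fin n × Fin N' => v x.2) using 1
  simp only [Fintype.sum_prod_type, Finset.sum_const, Finset.card_univ, Fintype.card_fin,
    nsmul_eq_mul, div_eq_mul_inv, mul_inv]
  ring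

lemma sum_st_wedge_mul_wedge {ι : Type*} [Fintype ι] (a b : ι → A m)
    (ha : ∀ x, S.st (a x) = a x) :
    ∑ x, ∑ y, S.st (a x * b y - a y * b x) * (a x * b y - a y * b x)
      = 2 * ((∑ x, a x * a x) * ∑ x, S.st (b x) * b x
          - S.st (∑ x, a x * b x) * ∑ x, a x * b x) := by
  have hterm : ∀ x y, S.st (a x * b y - a y * b x) * (a x * b y - a y * b x)
      = a x * a x * (S.st (b y) * b y) + a y * a y * (S.st (b x) * b x)
        - a x * S.st (b x) * (a y * b y) - a y * S.st (b y) * (a x * b x) := by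
    intro x y
    simp only [st_sub, S.st_mul, ha]
    ring
  simp only [hterm, Finset.sum_add_distrib, Finset.sum_sub_distrib]
  rw [Finset.sum_comm (f := fun x y => a y * a y * (S.st (b x) * b x)),
    Finset.sum_comm (f := fun x y => a y * S.st (b y) * (a x * b x))]
  simp only [← Finset.sum_mul_sum, st_sum, S.st_mul, ha]
  ring

lemma pos_cauchy_schwarz {ι : Type*} [Fintype ι] (a b : ι → A m)
    (ha : ∀ x, S.st (a x) = a x) :
    S.pos ((∑ x, a x * a x) * ∑ x, S.st (b x) * b x
      - S.st (∑ x, a x * b x) * ∑ x, a x * b x) := by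
  convert S.pos_of_fintype (fun z : ι × ι => a z.1 * b z.2 - a z.2 * b z.1)
    fun _ : Fin 2 => (1 : A m) using 1
  rw [Fintype.sum_prod_type, S.sum_st_wedge_mul_wedge a b ha]
  simp [S.st_one]

end Positivity

end AKP
end KPA

theorem statement_19_general {m n : ℕ} (S : KPA.AKP m) (T : Fin m → Fin m → KPA.A m)
    (hT2 : ∀ i k, ∑ j, S.Dm i j * T j k = T i k)
    (hTrD : ∑ i, S.Dm i i = (n : KPA.A m)) :
    S.pos ((∑ i, S.Dm i i) ^ 2 * (∑ i, ∑ j, S.st (T i j) * T i j)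
        - (∑ i, S.Dm i i) * (S.st (∑ i, T i i) * ∑ i, T i i)) ∧
    S.pos ((∑ i, ∑ j, S.st (T i j) * T i j)
        - ((n : KPA.A m))⁻¹ * (S.st (∑ i, T i i) * ∑ i, T i i)) := by
  have hcs := S.pos_cauchy_schwarz (fun x : Fin m × Fin m => S.Dm x.1 x.2)
    (fun x => T x.1 x.2) fun x => S.st_Dm x.1 x.2
  simp only [Fintype.sum_prod_type, S.sum_Dm_mul_self_eq_trace, S.sum_Dm_mul_eq_trace hT2,
    hTrD] at hcs
  rw [hTrD]
  refine ⟨?_, ?_⟩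
  · convert S.pos_natCast_mul hcs n using 1
    ring
  · -- for `n = 0` the junk value `(0 : A m)⁻¹ = 0` leaves only `∑ T_ij* T_ij`
    rcases eq_or_ne n 0 with rfl | hn
    · simpa [Fintype.sum_prod_type] using
        S.pos_sum_st_mul_self fun x : Fin m × Fin m => T x.1 x.2
    · convert S.pos_inv_natCast_mul hcs n using 1
      field_simp

/-- The Cauchy–Schwarz-type inequality for a tangential tensor `T^{ij}`
in an almost Kähler–Poisson algebra of geometric dimension `n`:
`(Tr D)² (T^{ij})* T_{ij} ≥ (Tr D)(Tr T)*(Tr T)`, and equivalently, since `Tr D = n`,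
`(T^{ij})* T_{ij} ≥ (1/n)(Tr T)*(Tr T)`, with respect to the positivity preorder. -/
theorem statement_19 {m n : ℕ} (S : KPA.AKP m) (T : Fin m → Fin m → KPA.A m)
    (hT1 : ∀ i k, ∑ j, T i j * S.Dm j k = T i k)
    (hT2 : ∀ i k, ∑ j, S.Dm i j * T j k = T i k)
    (hn : n = Module.finrank (KPA.A m) S.tSp)
    (hTrD : ∑ i, S.Dm i i = (n : KPA.A m)) :
    S.pos ((∑ i, S.Dm i i) ^ 2 * (∑ i, ∑ j, S.st (T i j) * T i j)
        - (∑ i, S.Dm i i) * (S.st (∑ i, T i i) * ∑ i, T i i)) ∧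
    S.pos ((∑ i, ∑ j, S.st (T i j) * T i j)
        - ((n : KPA.A m))⁻¹ * (S.st (∑ i, T i i) * ∑ i, T i i)) :=
  statement_19_general S T hT2 hTrD
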